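/- On ℝ² with coordinates (x̄,ā) define the vector fields X̄₁ = (0,2), X̄₂(x̄,ā) = (−x̄, ā), X̄₃(x̄,ā) = (1 − x̄ā, ā²/2), and the functions h₁(x̄,ā) = −x̄, h₂(x̄,ā) = −x̄ā/2, h₃(x̄,ā) = ā/2 − x̄ā²/4. Then for each α ∈ {1,2,3} and every (x̄,ā) ∈ ℝ², the components of X̄α satisfy X̄α¹ = 2 ∂hα/∂ā and X̄α² = −2 ∂hα/∂x̄; that is, each X̄α is the Hamiltonian vector field of hα with respect to the symplectic form Θ̄ = (1/2) dx̄ ∧ dā (equivalently ι_{X̄α}Θ̄ = dhα), so the reduced Schwarz system is a Lie–Hamilton system. -/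

import Mathlib

/-- The reduced vector fields X̄₁, X̄₂, X̄₃ on ℝ² with coordinates (x̄,ā). -/
noncomputable def schXbar : Fin 3 → (Fin 2 → ℝ) → (Fin 2 → ℝ) :=
  ![fun _ => ![0, 2],
    fun q => ![-q 0, q 1],
    fun q => ![1 - q 0 * q 1, (q 1) ^ 2 / 2]]

/-- The Hamiltonian functions h₁, h₂, h₃ on ℝ² with coordinates (x̄,ā). -/
noncomputable def schH : Fin 3 → (Fin 2 → ℝ) → ℝ :=
  ![fun q => -q 0,
    fun q => -(q 0 * q 1) / 2,
    fun q => q 1 / 2 - q 0 * (q 1) ^ 2 / 4]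

theorem fderiv_pi_single_eq_deriv_update {𝕜 ι F : Type*} [NontriviallyNormedField 𝕜]
    [Fintype ι] [DecidableEq ι] [NormedAddCommGroup F] [NormedSpace 𝕜 F]
    {f : (ι → 𝕜) → F} {q : ι → 𝕜} (hf : DifferentiableAt 𝕜 f q) (i : ι) :
    fderiv 𝕜 f q (Pi.single i 1) = deriv (fun t ↦ f (Function.update q i t)) (q i) := by
  rw [← Function.update_eq_self i q] at hf
  have hline := hf.hasFDerivAt.comp_hasDerivAt (q i) (hasDerivAt_update q i (q i))
  rw [Function.update_eq_self] at hline
  exact hline.deriv.symm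

theorem differentiable_schH (α : Fin 3) : Differentiable ℝ (schH α) := by
  fin_cases α <;>
    simp only [schH, Fin.isValue, Fin.zero_eta, Fin.mk_one, Fin.reduceFinMk, Matrix.cons_val,
      Matrix.cons_val_zero, Matrix.cons_val_one] <;>
    fun_prop

/-- Each X̄α is the Hamiltonian vector field of hα with respect to the
symplectic form Θ̄ = (1/2) dx̄ ∧ dā: in coordinates, X̄α¹ = 2 ∂hα/∂ā and
X̄α² = −2 ∂hα/∂x̄; the reduced Schwarz system is a Lie–Hamilton system. -/
theorem schwarz_reduced_hamiltonian :
    ∀ (α : Fin 3) (q : Fin 2 → ℝ),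
      schXbar α q 0 = 2 * fderiv ℝ (schH α) q (Pi.single 1 1) ∧
      schXbar α q 1 = -2 * fderiv ℝ (schH α) q (Pi.single 0 1) := by
  intro α q
  rw [fderiv_pi_single_eq_deriv_update (differentiable_schH α q),
    fderiv_pi_single_eq_deriv_update (differentiable_schH α q)]
  fin_cases α <;> constructor <;>
    simp (disch := fun_prop) [schXbar, schH, Function.update_apply, deriv_fun_sub] <;> ring
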